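/- arXiv:2011.04597 — 3 statements merged into one kernel-verified Lean document; each statement's English description precedes it below -/
import Mathlib

section
/- Let A be a vector bundle with connection ∇^A and vector bundle map ρ : A → TM. The bracket [a,b] = ∇^A_{ρ(a)} b − ∇^A_{ρ(b)} a satisfies the Jacobi identity (and hence defines a Lie algebroid structure on A with anchor ρ) if and only if R^A(ρ(a), ρ(b)) c + R^A(ρ(b), ρ(c)) a + R^A(ρ(c), ρ(a)) b = 0 for all sections a, b, c, where R^A is the curvature of ∇^A; in particular this holds whenever ∇^A is flat. -/
/-- The bracket `[a,b] = ∇_{ρ a} b − ∇_{ρ b} a` associated to a connection `cov`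
on `A` and a bundle map `ρ : A → TM`. -/
def anchorBracket {R : Type*} [CommRing R] [Algebra ℝ R]
    {ΓA : Type*} [AddCommGroup ΓA] [Module R ΓA]
    (ρ : ΓA →ₗ[R] Derivation ℝ R R)
    (cov : Derivation ℝ R R → ΓA → ΓA) (a b : ΓA) : ΓA :=
  cov (ρ a) b - cov (ρ b) a

/-- The curvature `R^A(X,Y) = ∇_X ∇_Y − ∇_Y ∇_X − ∇_{[X,Y]}` of a connection. -/
def curv {R : Type*} [CommRing R] [Algebra ℝ R]
    {ΓA : Type*} [AddCommGroup ΓA] [Module R ΓA]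
    (cov : Derivation ℝ R R → ΓA → ΓA)
    (X Y : Derivation ℝ R R) (c : ΓA) : ΓA :=
  cov X (cov Y c) - cov Y (cov X c) - cov ⁅X, Y⁆ c

/-!
STATEMENT 1.  Algebraic model: `R = C^∞(M)`, vector fields = `Derivation ℝ R R`,
`ΓA` = sections of `A`, `cov = ∇^A` a connection on `A`, `ρ : A → TM` a bundle
map intertwining the brackets.  The bracket `[a,b] = ∇^A_{ρ a} b − ∇^A_{ρ b} a`
satisfies the Jacobi identity (hence defines a Lie algebroid structure with
anchor `ρ`) if and only if the curvature of `∇^A` satisfies the cyclic identity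
`R^A(ρa,ρb)c + R^A(ρb,ρc)a + R^A(ρc,ρa)b = 0`; in particular Jacobi holds
whenever `∇^A` is flat.
-/
theorem stmt_1 {R : Type*} [CommRing R] [Algebra ℝ R]
    {ΓA : Type*} [AddCommGroup ΓA] [Module R ΓA]
    (ρ : ΓA →ₗ[R] Derivation ℝ R R)
    (cov : Derivation ℝ R R → ΓA → ΓA)
    (h_add1 : ∀ (X Y : Derivation ℝ R R) (a : ΓA), cov (X + Y) a = cov X a + cov Y a)
    (h_lin1 : ∀ (f : R) (X : Derivation ℝ R R) (a : ΓA), cov (f • X) a = f • cov X a)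
    (h_add2 : ∀ (X : Derivation ℝ R R) (a b : ΓA), cov X (a + b) = cov X a + cov X b)
    (h_leib : ∀ (X : Derivation ℝ R R) (f : R) (a : ΓA),
      cov X (f • a) = X f • a + f • cov X a)
    (h_anchor : ∀ a b : ΓA, ρ (anchorBracket ρ cov a b) = ⁅ρ a, ρ b⁆) :
    ((∀ a b c : ΓA,
        anchorBracket ρ cov (anchorBracket ρ cov a b) c
          + anchorBracket ρ cov (anchorBracket ρ cov b c) a
          + anchorBracket ρ cov (anchorBracket ρ cov c a) b = 0) ↔
      (∀ a b c : ΓA,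
        curv cov (ρ a) (ρ b) c + curv cov (ρ b) (ρ c) a + curv cov (ρ c) (ρ a) b = 0)) ∧
    ((∀ (X Y : Derivation ℝ R R) (c : ΓA), curv cov X Y c = 0) →
      ∀ a b c : ΓA,
        anchorBracket ρ cov (anchorBracket ρ cov a b) c
          + anchorBracket ρ cov (anchorBracket ρ cov b c) a
          + anchorBracket ρ cov (anchorBracket ρ cov c a) b = 0) := by
  have hneg : ∀ (X : Derivation ℝ R R) (a : ΓA), cov X (-a) = - cov X a := by
    intro X a
    have h := h_leib X (-1 : R) a
    rw [neg_one_smul] at h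
    rw [h, map_neg, Derivation.map_one_eq_zero, neg_zero, zero_smul, zero_add, neg_one_smul]
  have hsub : ∀ (X : Derivation ℝ R R) (a b : ΓA), cov X (a - b) = cov X a - cov X b := by
    intro X a b
    rw [sub_eq_add_neg, h_add2, hneg, sub_eq_add_neg]
  have key : ∀ a b c : ΓA,
      anchorBracket ρ cov (anchorBracket ρ cov a b) c
        + anchorBracket ρ cov (anchorBracket ρ cov b c) a
        + anchorBracket ρ cov (anchorBracket ρ cov c a) b
      = -(curv cov (ρ a) (ρ b) c + curv cov (ρ b) (ρ c) a + curv cov (ρ c) (ρ a) b) := by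
    intro a b c
    have hanchor' : ∀ a b : ΓA, ρ (cov (ρ a) b - cov (ρ b) a) = ⁅ρ a, ρ b⁆ := h_anchor
    simp only [anchorBracket, curv, hanchor', hsub]
    abel
  constructor
  · constructor
    · intro h a b c
      have k := key a b c
      rw [h a b c] at k
      exact neg_eq_zero.mp k.symm
    · intro h a b c
      rw [key a b c, h a b c, neg_zero]
  · intro hflat a b c
    rw [key a b c, hflat, hflat, hflat]
    simp
end

section
/- Let π : M → B be a surjective submersion. A covariant 2-tensor 𝒯 on M is π-basic (i.e. 𝒯 = π*𝒯^B for some covariant 2-tensor 𝒯^B on B) if and only if s*𝒯 = t*𝒯, where s, t : M ×_B M → M are the two projections of the fiber product. -/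
/-!
Since `dπ` is onto at every point, pick a point `σ b` in each fiber and a linear right inverse
`g` of `dπ` at `σ b`, and set `T^B_b(u, u') := T_{σ b}(g u, g u')`. For `v, v' ∈ T_x M` the pairs
`(v, g (dπ v))` and `(v', g (dπ v'))` are tangent to `M ×_B M` at `(x, σ (π x))`, so `s^*T = t^*T`
gives `T_x(v, v') = T^B_{π x}(dπ v, dπ v')`.
-/

open Function

section Descent

variable {ι κ R V W P : Type*} [CommRing R] [AddCommGroup V] [Module R V]
  [AddCommGroup W] [Module R W] [Module.Projective R W] [AddCommGroup P] [Module R P]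

theorem exists_compl₁₂_iff_of_surjective {p : ι → κ} (hp : Surjective p)
    {f : ι → V →ₗ[R] W} (hf : ∀ x, Surjective (f x)) (T : ι → V →ₗ[R] V →ₗ[R] P) :
    (∃ TB : κ → W →ₗ[R] W →ₗ[R] P, ∀ x v v', T x v v' = TB (p x) (f x v) (f x v')) ↔
      ∀ x y, p x = p y → ∀ v v' w w', f x v = f y w → f x v' = f y w' →
        T x v v' = T y w w' := by
  constructor
  · rintro ⟨TB, hTB⟩ x y hxy v v' w w' hv hv'
    rw [hTB, hTB, hxy, hv, hv']
  · intro h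
    choose σ hσ using hp
    choose g hg using fun b =>
      (f (σ b)).exists_rightInverse_of_surjective (LinearMap.range_eq_top_of_surjective _ (hf _))
    have hfg (b : κ) (u : W) : f (σ b) (g b u) = u := LinearMap.congr_fun (hg b) u
    refine ⟨fun b => (T (σ b)).compl₁₂ (g b) (g b), fun x v v' => ?_⟩
    exact h x _ (hσ _).symm v v' _ _ (hfg _ _).symm (hfg _ _).symm

end Descent

theorem stmt_8_general
    {EM : Type*} [NormedAddCommGroup EM] [NormedSpace ℝ EM]
    {HM : Type*} [TopologicalSpace HM] {IM : ModelWithCorners ℝ EM HM}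
    {M : Type*} [TopologicalSpace M] [ChartedSpace HM M]
    {EB : Type*} [NormedAddCommGroup EB] [NormedSpace ℝ EB]
    {HB : Type*} [TopologicalSpace HB] {IB : ModelWithCorners ℝ EB HB}
    {B : Type*} [TopologicalSpace B] [ChartedSpace HB B]
    (π : M → B)
    (hsurj : Function.Surjective π)
    (hsubm : ∀ x : M, Function.Surjective (mfderiv IM IB π x))
    (T : ∀ x : M, TangentSpace IM x →ₗ[ℝ] TangentSpace IM x →ₗ[ℝ] ℝ) :
    (∃ TB : ∀ b : B, TangentSpace IB b →ₗ[ℝ] TangentSpace IB b →ₗ[ℝ] ℝ,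
        ∀ (x : M) (v v' : TangentSpace IM x),
          T x v v' = TB (π x) (mfderiv IM IB π x v) (mfderiv IM IB π x v')) ↔
      (∀ x y : M, π x = π y →
        ∀ (v v' : TangentSpace IM x) (w w' : TangentSpace IM y),
          (mfderiv IM IB π x v : EB) = (mfderiv IM IB π y w : EB) →
          (mfderiv IM IB π x v' : EB) = (mfderiv IM IB π y w' : EB) →
          T x v v' = T y w w') :=
  exists_compl₁₂_iff_of_surjective hsurj
    (f := fun x => show EM →ₗ[ℝ] EB from (mfderiv IM IB π x).toLinearMap) hsubm T

theorem stmt_8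
    {EM : Type*} [NormedAddCommGroup EM] [NormedSpace ℝ EM]
    {HM : Type*} [TopologicalSpace HM] {IM : ModelWithCorners ℝ EM HM}
    {M : Type*} [TopologicalSpace M] [ChartedSpace HM M] [IsManifold IM (⊤ : ℕ∞) M]
    {EB : Type*} [NormedAddCommGroup EB] [NormedSpace ℝ EB]
    {HB : Type*} [TopologicalSpace HB] {IB : ModelWithCorners ℝ EB HB}
    {B : Type*} [TopologicalSpace B] [ChartedSpace HB B] [IsManifold IB (⊤ : ℕ∞) B]
    (π : M → B) (hπ : ContMDiff IM IB (⊤ : ℕ∞) π)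
    (hsurj : Function.Surjective π)
    (hsubm : ∀ x : M, Function.Surjective (mfderiv IM IB π x))
    (hconn : ∀ b : B, IsPreconnected (π ⁻¹' {b}))
    (T : ∀ x : M, TangentSpace IM x →ₗ[ℝ] TangentSpace IM x →ₗ[ℝ] ℝ) :
    (∃ TB : ∀ b : B, TangentSpace IB b →ₗ[ℝ] TangentSpace IB b →ₗ[ℝ] ℝ,
        ∀ (x : M) (v v' : TangentSpace IM x),
          T x v v' = TB (π x) (mfderiv IM IB π x v) (mfderiv IM IB π x v')) ↔
      (∀ x y : M, π x = π y →
        ∀ (v v' : TangentSpace IM x) (w w' : TangentSpace IM y),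
          (mfderiv IM IB π x v : EB) = (mfderiv IM IB π y w : EB) →
          (mfderiv IM IB π x v' : EB) = (mfderiv IM IB π y w' : EB) →
          T x v v' = T y w w') :=
  stmt_8_general π hsurj hsubm T
end

section
/- Let A ⇒ M be a Lie algebroid admitting an IM connection (ℱ, ∇^A, ∇^M, l) on its tangent bundle. Then the Lie bracket vanishes on the kernel of the anchor: if a, b are sections of A with ρ(a) = ρ(b) = 0, then [a,b]_A = 0. Hence the isotropy Lie algebras of A are abelian. -/
/-!
STATEMENT 14.  Algebraic model of a Lie algebroid `A ⇒ M` admitting an IM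
connection on its tangent bundle: `R = C^∞(M)`, vector fields =
`Derivation ℝ R R`, `Γ` = sections of `A`, anchor `ρ`.  The IM connection data
satisfies in particular equation (IM_conn_1):
`[a,b]_A = ∇^A_{ρ(a)} b − ∇^A_{ρ(b)} a − ι_{ρ(b)} l(a)`.
Conclusion: the bracket vanishes on the kernel of the anchor: if
`ρ a = 0 = ρ b` then `[a,b]_A = 0` (hence the isotropy Lie algebras are
abelian).
-/
theorem stmt_14 {R : Type*} [CommRing R] [Algebra ℝ R]
    {Γ : Type*} [LieRing Γ] [LieAlgebra ℝ Γ] [Module R Γ]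
    (ρ : Γ →ₗ[R] Derivation ℝ R R)
    (covA : Derivation ℝ R R → Γ → Γ)
    (hA1 : ∀ X Y a, covA (X + Y) a = covA X a + covA Y a)
    (hA2 : ∀ (f : R) X a, covA (f • X) a = f • covA X a)
    (hA3 : ∀ X a b, covA X (a + b) = covA X a + covA X b)
    (hA4 : ∀ X (f : R) a, covA X (f • a) = X f • a + f • covA X a)
    (l : Γ →ₗ[R] Derivation ℝ R R →ₗ[R] Γ)
    (hIM1 : ∀ a b : Γ, ⁅a, b⁆ = covA (ρ a) b - covA (ρ b) a - l a (ρ b)) :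
    ∀ a b : Γ, ρ a = 0 → ρ b = 0 → ⁅a, b⁆ = 0 := by
  intro a b ha hb
  have h0 : ∀ c : Γ, covA 0 c = 0 := by
    intro c
    have := hA2 (0 : R) 0 c
    simpa using this
  rw [hIM1, ha, hb, h0, h0, map_zero]
  simp
end
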